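/- arXiv:1608.02293 — 7 statements merged into one kernel-verified Lean document; each statement's English description precedes it below -/
import Mathlib

section
/- Let n ≥ 1 and let Q be a nontrivial finite connected quiver which either has at least one loop at some vertex, or contains a local k-generalized path Kronecker quiver with k ≥ 2 at one of its vertices. Then for the dimension vector β = (n, …, n) there exists a point W ∈ F•Rep(Q,β) whose stabilizer in 𝕌 is trivial: if (u_i)_{i∈Q₀} ∈ 𝕌 satisfies u_{h(a)} · W(a) · u_{t(a)}⁻¹ = W(a) for every arrow a ∈ Q₁, then u_i = Iₙ for every vertex i ∈ Q₀. -/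
/-- `UT n X` : `X` is an `n × n` upper triangular complex matrix (an element of 𝔟). -/
def UT (n : ℕ) (X : Matrix (Fin n) (Fin n) ℂ) : Prop :=
  ∀ i j : Fin n, (j : ℕ) < (i : ℕ) → X i j = 0

/-- `Unip n u` : `u` is a unipotent upper triangular matrix (an element of `U`). -/
def Unip (n : ℕ) (u : Matrix (Fin n) (Fin n) ℂ) : Prop :=
  UT n u ∧ ∀ i : Fin n, u i i = 1

/-- A finite quiver: finite vertex set `Q0`, finite arrow set `Q1`, head and tail maps. -/
structure FinQuiver where
  Q0 : Type
  Q1 : Type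
  [fin0 : Fintype Q0]
  [fin1 : Fintype Q1]
  [dec0 : DecidableEq Q0]
  h : Q1 → Q0
  t : Q1 → Q0

attribute [instance] FinQuiver.fin0 FinQuiver.fin1 FinQuiver.dec0

/-- Adjacency in the underlying undirected graph of the quiver. -/
def FinQuiver.Adj (Q : FinQuiver) (v w : Q.Q0) : Prop :=
  ∃ a : Q.Q1, (Q.t a = v ∧ Q.h a = w) ∨ (Q.t a = w ∧ Q.h a = v)

/-- `Q` is nontrivial and connected: the vertex set is nonempty and any two vertices are
joined by an undirected walk. -/
def FinQuiver.Connected (Q : FinQuiver) : Prop :=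
  Nonempty Q.Q0 ∧ ∀ v w : Q.Q0, Relation.ReflTransGen Q.Adj v w

/-- `Q.IsCFPath L v w` : the nonempty list of arrows `L = [a₁, …, a_m]` is a nontrivial
cycle-free path from `v` to `w`: consecutive arrows compose (`h aᵣ = t a_{r+1}`), the tail of
the first arrow is `v`, the head of the last arrow is `w`, and the sequence of visited
vertices `v, h a₁, …, h a_m` has no repetition. -/
def FinQuiver.IsCFPath (Q : FinQuiver) (L : List Q.Q1) (v w : Q.Q0) : Prop :=
  ∃ hne : L ≠ [],
    L.Chain' (fun a b => Q.h a = Q.t b) ∧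
    Q.t (L.head hne) = v ∧ Q.h (L.getLast hne) = w ∧
    (v :: L.map Q.h).Nodup

/-- `Q` has a loop at some vertex. -/
def FinQuiver.HasLoop (Q : FinQuiver) : Prop := ∃ a : Q.Q1, Q.h a = Q.t a

/-- `Q` contains a local `k`-generalized path Kronecker quiver with `k ≥ 2` at one of its
vertices: there are vertices `i ≠ j` and `k ≥ 2` pairwise distinct nontrivial cycle-free
paths, each going either from `i` to `j` or from `j` to `i`. -/
def FinQuiver.HasLocalPathKronecker (Q : FinQuiver) : Prop :=
  ∃ i j : Q.Q0, j ≠ i ∧ ∃ k : ℕ, 2 ≤ k ∧ ∃ P : Fin k → List Q.Q1,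
    Function.Injective P ∧
    ∀ r : Fin k, Q.IsCFPath (P r) i j ∨ Q.IsCFPath (P r) j i

/-!
A loop is not a bridge of the underlying graph of `Q`. Nor is an arrow lying on a path
`i → j` followed by a path `j → i`, nor one lying on exactly one of two distinct cycle-free
paths `i → j` (such paths are determined by their sets of arrows). Put `diag(0, 1, …, n - 1)`
on such an arrow `a₀` and the identity on all others. A unipotent stabiliser `u` is then constant
along every arrow but `a₀`, hence on all of `Q`, which stays connected without `a₀`; the common
value commutes with a diagonal matrix with distinct entries, so it is diagonal, hence `1`.
-/

namespace FinQuiver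

open Relation

variable {Q : FinQuiver} {a : Q.Q1} {L L₁ L₂ : List Q.Q1} {u v w : Q.Q0}

def IsWalk (Q : FinQuiver) : List Q.Q1 → Q.Q0 → Q.Q0 → Prop
  | [], v, w => v = w
  | a :: L, v, w => Q.t a = v ∧ Q.IsWalk L (Q.h a) w

lemma IsWalk.append (h₁ : Q.IsWalk L₁ u v)
    (h₂ : Q.IsWalk L₂ v w) : Q.IsWalk (L₁ ++ L₂) u w := by
  induction L₁ generalizing u with
  | nil => exact h₁ ▸ h₂
  | cons a L ih => exact ⟨h₁.1, ih h₁.2⟩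

lemma IsWalk.t_mem (hL : Q.IsWalk L v w) (ha : a ∈ L) : Q.t a ∈ v :: L.map Q.h := by
  induction L generalizing v with
  | nil => simp at ha
  | cons b L ih =>
    obtain rfl | ha := List.mem_cons.mp ha
    · simp [hL.1]
    · simpa using Or.inr (ih hL.2 ha)

lemma IsCFPath.isWalk (hL : Q.IsCFPath L v w) : Q.IsWalk L v w := by
  obtain ⟨hne, hchain, hv, hw, -⟩ := hL
  induction L generalizing v with
  | nil => exact absurd rfl hne
  | cons a L ih =>
    refine ⟨hv, ?_⟩
    cases L with
    | nil => exact hw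
    | cons b L =>
      rw [List.Chain', List.isChain_cons_cons] at hchain
      exact ih (List.cons_ne_nil _ _) hchain.2 hchain.1.symm hw

def AdjExcept (Q : FinQuiver) (a : Q.Q1) (v w : Q.Q0) : Prop :=
  ∃ b : Q.Q1, b ≠ a ∧ ((Q.t b = v ∧ Q.h b = w) ∨ (Q.t b = w ∧ Q.h b = v))

instance (a : Q.Q1) : Std.Symm (Q.AdjExcept a) where
  symm _ _ := fun ⟨b, hb, hvw⟩ => ⟨b, hb, hvw.symm⟩

/-- `a` lies on a cycle of the underlying undirected graph, i.e. it is not a bridge. -/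
def OnCycle (Q : FinQuiver) (a : Q.Q1) : Prop :=
  ReflTransGen (Q.AdjExcept a) (Q.t a) (Q.h a)

lemma IsWalk.reflTransGen_adjExcept (hL : Q.IsWalk L v w) (ha : a ∉ L) :
    ReflTransGen (Q.AdjExcept a) v w := by
  induction L generalizing v with
  | nil => exact hL ▸ .refl
  | cons b L ih =>
    rw [List.mem_cons, not_or] at ha
    exact .head ⟨b, Ne.symm ha.1, .inl ⟨hL.1, rfl⟩⟩ (ih hL.2 ha.2)

/-- The part of the walk before the first occurrence of `a` avoids `a`. -/
lemma IsWalk.reflTransGen_adjExcept_tail (hL : Q.IsWalk L v w) (ha : a ∈ L) :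
    ReflTransGen (Q.AdjExcept a) v (Q.t a) := by
  induction L generalizing v with
  | nil => simp at ha
  | cons b L ih =>
    by_cases hba : b = a
    · exact hba ▸ hL.1 ▸ .refl
    · exact .head ⟨b, hba, .inl ⟨hL.1, rfl⟩⟩ (ih hL.2 ((List.mem_cons.mp ha).resolve_left
        (Ne.symm hba)))

/-- The part of the walk after the last occurrence of `a` avoids `a`. -/
lemma IsWalk.reflTransGen_adjExcept_head (hL : Q.IsWalk L v w) (ha : a ∈ L) :
    ReflTransGen (Q.AdjExcept a) (Q.h a) w := by
  induction L generalizing v with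
  | nil => simp at ha
  | cons b L ih =>
    by_cases haL : a ∈ L
    · exact ih hL.2 haL
    · obtain rfl := (List.mem_cons.mp ha).resolve_right haL
      exact hL.2.reflTransGen_adjExcept haL

lemma IsWalk.onCycle_of_mem_of_not_mem (h₁ : Q.IsWalk L₁ v w) (h₂ : Q.IsWalk L₂ v w)
    (ha₁ : a ∈ L₁) (ha₂ : a ∉ L₂) : Q.OnCycle a :=
  (symm (h₁.reflTransGen_adjExcept_tail ha₁)).trans
    ((h₂.reflTransGen_adjExcept ha₂).trans (symm (h₁.reflTransGen_adjExcept_head ha₁)))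

lemma IsWalk.onCycle_of_mem (hL : Q.IsWalk L v v) (ha : a ∈ L) : Q.OnCycle a :=
  (symm (hL.reflTransGen_adjExcept_tail ha)).trans (symm (hL.reflTransGen_adjExcept_head ha))

lemma IsWalk.eq_of_subset_of_subset (h₁ : Q.IsWalk L₁ v w) (hn₁ : (v :: L₁.map Q.h).Nodup)
    (h₂ : Q.IsWalk L₂ v w) (hn₂ : (v :: L₂.map Q.h).Nodup)
    (h₁₂ : L₁ ⊆ L₂) (h₂₁ : L₂ ⊆ L₁) : L₁ = L₂ := by
  induction L₁ generalizing v L₂ with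
  | nil => exact (List.subset_nil.mp h₂₁).symm
  | cons a L₁ ih =>
    obtain _ | ⟨b, L₂⟩ := L₂
    · exact absurd (h₁₂ List.mem_cons_self) List.not_mem_nil
    -- the only arrow of `b :: L₂` leaving `v` is `b`, as the walk never returns to `v`
    obtain rfl : a = b := by
      refine (List.mem_cons.mp (h₁₂ List.mem_cons_self)).resolve_right fun ha => ?_
      have := h₂.2.t_mem ha
      rw [h₁.1] at this
      exact (List.nodup_cons.mp hn₂).1 (by simpa using this)
    have ha₁ : a ∉ L₁ := fun ha => (List.nodup_cons.mp hn₁.of_cons).1 (List.mem_map_of_mem ha)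
    have ha₂ : a ∉ L₂ := fun ha => (List.nodup_cons.mp hn₂.of_cons).1 (List.mem_map_of_mem ha)
    rw [ih h₁.2 (by simpa using hn₁.of_cons) h₂.2 (by simpa using hn₂.of_cons)
      (fun c hc => (List.mem_cons.mp (h₁₂ (List.mem_cons_of_mem _ hc))).resolve_left
        (ne_of_mem_of_not_mem hc ha₁))
      (fun c hc => (List.mem_cons.mp (h₂₁ (List.mem_cons_of_mem _ hc))).resolve_left
        (ne_of_mem_of_not_mem hc ha₂))]

lemma IsCFPath.exists_onCycle_of_ne (h₁ : Q.IsCFPath L₁ v w) (h₂ : Q.IsCFPath L₂ v w)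
    (hne : L₁ ≠ L₂) : ∃ a, Q.OnCycle a := by
  by_contra! hQ
  refine hne (h₁.isWalk.eq_of_subset_of_subset h₁.2.2.2.2 h₂.isWalk h₂.2.2.2.2
    (fun a ha₁ => ?_) (fun a ha₂ => ?_))
  · by_contra ha₂
    exact hQ a (h₁.isWalk.onCycle_of_mem_of_not_mem h₂.isWalk ha₁ ha₂)
  · by_contra ha₁
    exact hQ a (h₂.isWalk.onCycle_of_mem_of_not_mem h₁.isWalk ha₂ ha₁)

lemma IsCFPath.exists_onCycle_of_isCFPath_swap (h₁ : Q.IsCFPath L₁ v w)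
    (h₂ : Q.IsCFPath L₂ w v) : ∃ a, Q.OnCycle a :=
  have ⟨a, ha⟩ := List.exists_mem_of_ne_nil _ h₁.1
  ⟨a, (h₁.isWalk.append h₂.isWalk).onCycle_of_mem (List.mem_append_left _ ha)⟩

lemma HasLoop.exists_onCycle (hQ : Q.HasLoop) : ∃ a, Q.OnCycle a :=
  have ⟨a, ha⟩ := hQ
  ⟨a, by rw [OnCycle, ha]⟩

lemma HasLocalPathKronecker.exists_onCycle (hQ : Q.HasLocalPathKronecker) :
    ∃ a, Q.OnCycle a := by
  obtain ⟨i, j, -, k, hk, P, hP, hpaths⟩ := hQ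
  have hne : P ⟨0, by omega⟩ ≠ P ⟨1, by omega⟩ := hP.ne (by simp)
  rcases hpaths ⟨0, by omega⟩ with h₀ | h₀ <;> rcases hpaths ⟨1, by omega⟩ with h₁ | h₁
  · exact h₀.exists_onCycle_of_ne h₁ hne
  · exact h₀.exists_onCycle_of_isCFPath_swap h₁
  · exact h₀.exists_onCycle_of_isCFPath_swap h₁
  · exact h₀.exists_onCycle_of_ne h₁ hne

lemma Connected.reflTransGen_adjExcept (hQ : Q.Connected) (ha : Q.OnCycle a)
    (v w : Q.Q0) : ReflTransGen (Q.AdjExcept a) v w := by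
  refine reflTransGen_closed (fun x y ⟨b, hxy⟩ => ?_) v w (hQ.2 v w)
  by_cases hba : b = a
  · subst hba
    rcases hxy with ⟨rfl, rfl⟩ | ⟨rfl, rfl⟩
    exacts [ha, symm ha]
  · exact .single ⟨b, hba, hxy⟩

lemma eq_of_reflTransGen_adjExcept {α : Type*} {f : Q.Q0 → α}
    (hf : ∀ b, b ≠ a → f (Q.h b) = f (Q.t b)) (hvw : ReflTransGen (Q.AdjExcept a) v w) :
    f v = f w := by
  induction hvw with
  | refl => rfl
  | tail _ hxy ih =>
    obtain ⟨b, hb, ⟨rfl, rfl⟩ | ⟨rfl, rfl⟩⟩ := hxy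
    exacts [ih.trans (hf b hb).symm, ih.trans (hf b hb)]

end FinQuiver

lemma ut_diagonal {n : ℕ} (d : Fin n → ℂ) : UT n (Matrix.diagonal d) :=
  fun _ _ hij => Matrix.diagonal_apply_ne _ (Fin.ne_of_gt hij)

lemma Unip.isUnit_det {n : ℕ} {u : Matrix (Fin n) (Fin n) ℂ} (hu : Unip n u) :
    IsUnit u.det := by
  rw [Matrix.det_of_isUpperTriangular (fun i j hij => hu.1 i j hij)]
  simp [hu.2]

lemma Unip.eq_one_of_commute_diagonal {n : ℕ} {u : Matrix (Fin n) (Fin n) ℂ} (hu : Unip n u)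
    {d : Fin n → ℂ} (hd : Function.Injective d)
    (hcomm : u * Matrix.diagonal d = Matrix.diagonal d * u) : u = 1 := by
  ext i j
  obtain rfl | hij := eq_or_ne i j
  · simp [hu.2]
  · have hentry : u i j * d j = d i * u i j := by
      simpa [Matrix.mul_diagonal, Matrix.diagonal_mul] using congrFun (congrFun hcomm i) j
    have hsub : d j - d i ≠ 0 := sub_ne_zero.mpr (hd.ne hij.symm)
    rw [Matrix.one_apply_ne hij]
    exact (mul_eq_zero.mp (by linear_combination hentry : u i j * (d j - d i) = 0)).resolve_right
      hsub

lemma Matrix.mul_eq_mul_of_mul_mul_nonsing_inv_eq {n α : Type*} [Fintype n] [DecidableEq n]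
    [CommRing α] {A B W : Matrix n n α} (hB : IsUnit B.det) (h : A * W * B⁻¹ = W) :
    A * W = W * B := by
  calc A * W = A * W * B⁻¹ * B := (Matrix.nonsing_inv_mul_cancel_right B _ hB).symm
    _ = W * B := by rw [h]

theorem filtered_rep_has_point_with_trivial_unipotent_stabilizer_general
    (n : ℕ) (Q : FinQuiver)
    (hconn : Q.Connected)
    (hQ : Q.HasLoop ∨ Q.HasLocalPathKronecker) :
    ∃ W : Q.Q1 → Matrix (Fin n) (Fin n) ℂ,
      (∀ a : Q.Q1, UT n (W a)) ∧
      ∀ u : Q.Q0 → Matrix (Fin n) (Fin n) ℂ,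
        (∀ v : Q.Q0, Unip n (u v)) →
        (∀ a : Q.Q1, u (Q.h a) * W a * (u (Q.t a))⁻¹ = W a) →
        ∀ v : Q.Q0, u v = 1 := by
  classical
  obtain ⟨a₀, ha₀⟩ := hQ.elim FinQuiver.HasLoop.exists_onCycle
    FinQuiver.HasLocalPathKronecker.exists_onCycle
  let d : Fin n → ℂ := fun k => (k : ℕ)
  have hd : Function.Injective d := Nat.cast_injective.comp Fin.val_injective
  refine ⟨fun a => Matrix.diagonal (if a = a₀ then d else 1), fun a => ut_diagonal _,
    fun u hu hW => ?_⟩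
  have hW' a := Matrix.mul_eq_mul_of_mul_mul_nonsing_inv_eq (hu (Q.t a)).isUnit_det (hW a)
  have hconst v : u v = u (Q.t a₀) :=
    FinQuiver.eq_of_reflTransGen_adjExcept (fun b hb => by simpa [hb] using hW' b)
      (hconn.reflTransGen_adjExcept ha₀ v (Q.t a₀))
  have hcomm : u (Q.t a₀) * Matrix.diagonal d = Matrix.diagonal d * u (Q.t a₀) := by
    simpa [← hconst (Q.h a₀)] using hW' a₀
  exact fun v => (hconst v).trans ((hu _).eq_one_of_commute_diagonal hd hcomm)

/-- **Theorem 1.1 (1).** If `Q` is a nontrivial finite connected quiver with a loop or with a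
local `k`-generalized path Kronecker quiver (`k ≥ 2`) at some vertex, then for
`β = (n, …, n)` there is a point `W` of the complete filtered representation space
`F•Rep(Q,β) = ∏_{a ∈ Q₁} 𝔟` whose stabilizer in `𝕌 = U^{Q₀}` is trivial. -/
theorem filtered_rep_has_point_with_trivial_unipotent_stabilizer
    (n : ℕ) (hn : 1 ≤ n) (Q : FinQuiver)
    (hconn : Q.Connected)
    (hQ : Q.HasLoop ∨ Q.HasLocalPathKronecker) :
    ∃ W : Q.Q1 → Matrix (Fin n) (Fin n) ℂ,
      (∀ a : Q.Q1, UT n (W a)) ∧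
      ∀ u : Q.Q0 → Matrix (Fin n) (Fin n) ℂ,
        (∀ v : Q.Q0, Unip n (u v)) →
        (∀ a : Q.Q1, u (Q.h a) * W a * (u (Q.t a))⁻¹ = W a) →
        ∀ v : Q.Q0, u v = 1 :=
  filtered_rep_has_point_with_trivial_unipotent_stabilizer_general n Q hconn hQ
end

section
/- Let n ≥ 1 and let p, q ≥ 0 be integers with p + q ≥ 2. Then there exist upper triangular matrices X₁, …, X_p ∈ 𝔟 and Y₁, …, Y_q ∈ 𝔟 such that for all u, v ∈ U: if u · X_j · v⁻¹ = X_j for every 1 ≤ j ≤ p and v · Y_l · u⁻¹ = Y_l for every 1 ≤ l ≤ q, then u = Iₙ and v = Iₙ. (This is the filtered representation of the k-generalized Kronecker quiver with k = p + q ≥ 2 arrows, p of them from vertex i to vertex j and q of them from j to i, having a point with trivial stabilizer in U × U.) -/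
lemma unip_det {n : ℕ} {u : Matrix (Fin n) (Fin n) ℂ} (hu : Unip n u) : u.det = 1 := by
  rw [Matrix.det_of_upperTriangular (fun i j h => hu.1 i j (by exact_mod_cast h))]
  simp [hu.2]

lemma unip_inv_mul {n : ℕ} {u : Matrix (Fin n) (Fin n) ℂ} (hu : Unip n u) : u⁻¹ * u = 1 :=
  Matrix.nonsing_inv_mul u (by simp [unip_det hu])

lemma eq_of_mul_inv {n : ℕ} {u v : Matrix (Fin n) (Fin n) ℂ} (hv : Unip n v)
    (h : u * v⁻¹ = 1) : u = v := by
  have := congrArg (· * v) h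
  simpa [Matrix.mul_assoc, unip_inv_mul hv] using this

noncomputable def D (n : ℕ) : Matrix (Fin n) (Fin n) ℂ := Matrix.diagonal (fun i => ((i : ℕ) : ℂ))

lemma comm_D {n : ℕ} {v : Matrix (Fin n) (Fin n) ℂ} (hv : Unip n v)
    (h : v * D n = D n * v) : v = 1 := by
  ext i j
  have h2 := congrFun (congrFun h i) j
  rw [D, Matrix.mul_diagonal, Matrix.diagonal_mul] at h2
  by_cases hij : i = j
  · subst hij; simp [hv.2 i]
  · have : ((i : ℕ) : ℂ) ≠ ((j : ℕ) : ℂ) := by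
      exact_mod_cast fun hc => hij (Fin.ext hc)
    have : v i j = 0 := by
      by_contra hvij
      exact this (mul_left_cancel₀ hvij (by linear_combination h2)).symm
    simp [this, Matrix.one_apply_ne hij]

/-- **Proposition 3.2.** For the `k`-generalized Kronecker quiver with `k = p + q ≥ 2`
arrows (`p` from vertex `i` to vertex `j` and `q` from `j` to `i`) and dimension vector
`(n, n)`, there is a point of the complete filtered representation space, i.e. upper
triangular matrices `X₁, …, X_p` and `Y₁, …, Y_q`, whose stabilizer in `U × U` is trivial:
if `u · X_j · v⁻¹ = X_j` for all `j` and `v · Y_l · u⁻¹ = Y_l` for all `l`, then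
`u = v = Iₙ`. -/
theorem kronecker_point_with_trivial_stabilizer
    (n : ℕ) (hn : 1 ≤ n) (p q : ℕ) (hpq : 2 ≤ p + q) :
    ∃ (X : Fin p → Matrix (Fin n) (Fin n) ℂ) (Y : Fin q → Matrix (Fin n) (Fin n) ℂ),
      (∀ j : Fin p, UT n (X j)) ∧ (∀ l : Fin q, UT n (Y l)) ∧
      ∀ u v : Matrix (Fin n) (Fin n) ℂ, Unip n u → Unip n v →
        (∀ j : Fin p, u * X j * v⁻¹ = X j) →
        (∀ l : Fin q, v * Y l * u⁻¹ = Y l) →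
        u = 1 ∧ v = 1 := by
  classical
  refine ⟨fun j => if (j : ℕ) = 0 then 1 else D n,
          fun l => if p = 0 ∧ (l : ℕ) = 0 then 1 else D n, ?_, ?_, ?_⟩
  · intro j i k hik
    dsimp only
    split
    · exact Matrix.one_apply_ne (fun h => by subst h; omega)
    · exact Matrix.diagonal_apply_ne _ (fun h => by subst h; omega)
  · intro l i k hik
    dsimp only
    split
    · exact Matrix.one_apply_ne (fun h => by subst h; omega)
    · exact Matrix.diagonal_apply_ne _ (fun h => by subst h; omega)
  · intro u v hu hv hX hY
    by_cases hp : p = 0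
    · -- q ≥ 2
      have hq2 : 2 ≤ q := by omega
      have h0 := hY ⟨0, by omega⟩
      simp only [hp, true_and, if_true, Matrix.mul_one] at h0
      have hvu : v = u := eq_of_mul_inv hu h0
      have h1 := hY ⟨1, by omega⟩
      simp only [hp, true_and, Fin.val_mk] at h1
      rw [if_neg (by norm_num)] at h1
      subst hvu
      have hcomm : v * D n = D n * v := by
        have := congrArg (· * v) h1
        simpa [Matrix.mul_assoc, unip_inv_mul hv] using this
      have : v = 1 := comm_D hv hcomm
      exact ⟨this, this⟩
    · have h0 := hX ⟨0, by omega⟩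
      simp only [Fin.val_mk, eq_self_iff_true, if_true, Matrix.mul_one] at h0
      have huv : u = v := eq_of_mul_inv hv h0
      subst huv
      have hD : u * D n * u⁻¹ = D n := by
        by_cases hp2 : 2 ≤ p
        · have h1 := hX ⟨1, by omega⟩
          simp only [Fin.val_mk] at h1
          rwa [if_neg (by norm_num)] at h1
        · have hq : 1 ≤ q := by omega
          have h1 := hY ⟨0, by omega⟩
          simp only [Fin.val_mk] at h1
          rwa [if_neg (by simp [hp])] at h1
      have hcomm : u * D n = D n * u := by
        have := congrArg (· * u) hD
        simpa [Matrix.mul_assoc, unip_inv_mul hu] using this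
      have : u = 1 := comm_D hu hcomm
      exact ⟨this, this⟩
end

section
/- Let n ≥ 1 and let X, X' ∈ 𝔟 be upper triangular matrices whose diagonal entries satisfy X_{ss}·X'_{tt} ≠ X'_{ss}·X_{tt} for all 1 ≤ s < t ≤ n. If u, v ∈ U satisfy u · X · v⁻¹ = X and u · X' · v⁻¹ = X', then u = Iₙ and v = Iₙ. -/
/-- Two parallel arrows of a `k`-generalized Kronecker quiver: if the upper triangular
matrices `X, X'` satisfy `X_{ss}·X'_{tt} ≠ X'_{ss}·X_{tt}` for all `s < t`, then the only
pair `(u, v)` of unipotent upper triangular matrices with `u X v⁻¹ = X` and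
`u X' v⁻¹ = X'` is the trivial pair `(Iₙ, Iₙ)`. -/
theorem two_parallel_arrows_trivial_stabilizer
    (n : ℕ) (hn : 1 ≤ n) (X X' : Matrix (Fin n) (Fin n) ℂ)
    (hX : UT n X) (hX' : UT n X')
    (hgen : ∀ s t : Fin n, (s : ℕ) < (t : ℕ) → X s s * X' t t ≠ X' s s * X t t)
    (u v : Matrix (Fin n) (Fin n) ℂ) (hu : Unip n u) (hv : Unip n v)
    (h1 : u * X * v⁻¹ = X) (h2 : u * X' * v⁻¹ = X') :
    u = 1 ∧ v = 1 := by
  have hvdet : IsUnit v.det := by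
    have hbt : v.BlockTriangular id := fun i j h => hv.1 i j h
    have : v.det = 1 := by
      rw [Matrix.det_of_upperTriangular hbt]
      simp [hv.2]
    simp [this]
  have hmul : ∀ (Y : Matrix (Fin n) (Fin n) ℂ), u * Y * v⁻¹ = Y → u * Y = Y * v := by
    intro Y h
    have h' := congrArg (· * v) h
    simpa [Matrix.mul_assoc, Matrix.nonsing_inv_mul v hvdet] using h'
  have e1 := hmul X h1
  have e2 := hmul X' h2
  have key : ∀ d : ℕ, ∀ s t : Fin n, (s : ℕ) < (t : ℕ) → (t : ℕ) - (s : ℕ) ≤ d →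
      u s t = 0 ∧ v s t = 0 := by
    intro d
    induction d using Nat.strong_induction_on with
    | _ d ih =>
      intro s t hst hd
      have hne : s ≠ t := fun h => by simp [h] at hst
      have hsum : ∀ (Y : Matrix (Fin n) (Fin n) ℂ), UT n Y → u * Y = Y * v →
          u s t * Y t t = Y s s * v s t := by
        intro Y hY hE
        have hL : (u * Y) s t = Y s t + u s t * Y t t := by
          rw [Matrix.mul_apply]
          rw [Fintype.sum_eq_add s t hne ?_]
          · rw [hu.2 s, one_mul]
          · intro k ⟨hks, hkt⟩
            have hks' : (k : ℕ) ≠ (s : ℕ) := fun h => hks (Fin.ext h)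
            have hkt' : (k : ℕ) ≠ (t : ℕ) := fun h => hkt (Fin.ext h)
            rcases lt_or_gt_of_ne hks' with h | h
            · rw [hu.1 s k h, zero_mul]
            · rcases lt_or_gt_of_ne hkt' with h2 | h2
              · have := (ih ((k : ℕ) - (s : ℕ)) (by omega) s k h (le_refl _)).1
                rw [this, zero_mul]
              · rw [hY k t h2, mul_zero]
        have hR : (Y * v) s t = Y s s * v s t + Y s t := by
          rw [Matrix.mul_apply]
          rw [Fintype.sum_eq_add s t hne ?_]
          · rw [hv.2 t, mul_one]
          · intro k ⟨hks, hkt⟩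
            have hks' : (k : ℕ) ≠ (s : ℕ) := fun h => hks (Fin.ext h)
            have hkt' : (k : ℕ) ≠ (t : ℕ) := fun h => hkt (Fin.ext h)
            rcases lt_or_gt_of_ne hks' with h | h
            · rw [hY s k h, zero_mul]
            · rcases lt_or_gt_of_ne hkt' with h2 | h2
              · have := (ih ((t : ℕ) - (k : ℕ)) (by omega) k t h2 (le_refl _)).2
                rw [this, mul_zero]
              · rw [hv.1 k t h2, mul_zero]
        have := congrFun (congrFun hE s) t
        rw [hL, hR] at this
        linear_combination this
      have q1 := hsum X hX e1
      have q2 := hsum X' hX' e2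
      have hg := hgen s t hst
      have hu0 : u s t = 0 := by
        by_contra h
        apply hg
        have hc : X s s * X' t t * u s t = X' s s * X t t * u s t := by
          calc X s s * X' t t * u s t = X s s * (u s t * X' t t) := by ring
            _ = X s s * (X' s s * v s t) := by rw [q2]
            _ = X' s s * (X s s * v s t) := by ring
            _ = X' s s * (u s t * X t t) := by rw [← q1]
            _ = X' s s * X t t * u s t := by ring
        exact mul_right_cancel₀ h hc
      rw [hu0, zero_mul] at q1 q2
      have hv0 : v s t = 0 := by
        by_contra h
        have hx : X s s = 0 := by
          rcases mul_eq_zero.mp q1.symm with h' | h'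
          · exact h'
          · exact absurd h' h
        have hx' : X' s s = 0 := by
          rcases mul_eq_zero.mp q2.symm with h' | h'
          · exact h'
          · exact absurd h' h
        exact hg (by rw [hx, hx', zero_mul, zero_mul])
      exact ⟨hu0, hv0⟩
  constructor
  · ext i j
    rcases lt_trichotomy (i : ℕ) (j : ℕ) with h | h | h
    · rw [(key n i j h (by omega)).1, Matrix.one_apply_ne (fun he => by simp [he] at h)]
    · have : i = j := Fin.ext h
      rw [this, hu.2 j, Matrix.one_apply_eq]
    · rw [hu.1 i j h, Matrix.one_apply_ne (fun he => by simp [he] at h)]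
  · ext i j
    rcases lt_trichotomy (i : ℕ) (j : ℕ) with h | h | h
    · rw [(key n i j h (by omega)).2, Matrix.one_apply_ne (fun he => by simp [he] at h)]
    · have : i = j := Fin.ext h
      rw [this, hv.2 j, Matrix.one_apply_eq]
    · rw [hv.1 i j h, Matrix.one_apply_ne (fun he => by simp [he] at h)]
end

section
/- Let n ≥ 1 and let X, Y ∈ 𝔟 be upper triangular matrices whose diagonal entries satisfy X_{ss}·Y_{ss} ≠ X_{tt}·Y_{tt} for all 1 ≤ s < t ≤ n. If u, v ∈ U satisfy u · X · v⁻¹ = X and v · Y · u⁻¹ = Y, then u = Iₙ and v = Iₙ. -/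
lemma UT.mul {n : ℕ} {X Y : Matrix (Fin n) (Fin n) ℂ} (hX : UT n X) (hY : UT n Y) :
    UT n (X * Y) := by
  intro i j hij
  rw [Matrix.mul_apply]
  apply Finset.sum_eq_zero
  intro k _
  rcases Nat.lt_or_ge (k : ℕ) (i : ℕ) with hk | hk
  · rw [hX i k hk, zero_mul]
  · rw [hY k j (by omega), mul_zero]

lemma UT.mul_diag {n : ℕ} {X Y : Matrix (Fin n) (Fin n) ℂ} (hX : UT n X) (hY : UT n Y)
    (i : Fin n) : (X * Y) i i = X i i * Y i i := by
  rw [Matrix.mul_apply]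
  rw [Finset.sum_eq_single i]
  · intro k _ hk
    rcases Nat.lt_or_ge (k : ℕ) (i : ℕ) with h | h
    · rw [hX i k h, zero_mul]
    · have : (i : ℕ) < (k : ℕ) := lt_of_le_of_ne h (fun hh => hk (Fin.ext hh.symm))
      rw [hY k i this, mul_zero]
  · intro h; exact absurd (Finset.mem_univ i) h

lemma unip_det_one (n : ℕ) (u : Matrix (Fin n) (Fin n) ℂ) (hu : Unip n u) :
    u.det = 1 := by
  have hbt : u.BlockTriangular id := fun i j h => hu.1 i j h
  rw [Matrix.det_of_upperTriangular hbt]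
  simp [hu.2]

lemma sum_two {α M : Type*} [Fintype α] [DecidableEq α] [AddCommMonoid M]
    (f : α → M) (s t : α) (hst : s ≠ t) (h : ∀ k, k ≠ s → k ≠ t → f k = 0) :
    ∑ k, f k = f s + f t := by
  rw [← Finset.sum_subset (Finset.subset_univ ({s, t} : Finset α))
    (fun k _ hk => h k (fun h1 => hk (by simp [h1])) (fun h2 => hk (by simp [h2])))]
  rw [Finset.sum_pair hst]

lemma comm_unip (n : ℕ) (A u : Matrix (Fin n) (Fin n) ℂ) (hA : UT n A)
    (hd : ∀ s t : Fin n, (s : ℕ) < (t : ℕ) → A s s ≠ A t t)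
    (hu : Unip n u) (hcomm : u * A = A * u) : u = 1 := by
  have key : ∀ d : ℕ, ∀ s t : Fin n, (s : ℕ) < (t : ℕ) → (t : ℕ) - (s : ℕ) ≤ d →
      u s t = 0 := by
    intro d
    induction d with
    | zero => intro s t hst h; omega
    | succ d ih =>
      intro s t hst h
      rcases Nat.lt_or_ge ((t : ℕ) - (s : ℕ)) (d + 1) with hlt | hge
      · exact ih s t hst (by omega)
      have hst' : s ≠ t := fun hh => by subst hh; omega
      have hL : (u * A) s t = A s t + u s t * A t t := by
        rw [Matrix.mul_apply]
        rw [sum_two _ s t hst' ?_]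
        · rw [hu.2 s, one_mul]
        · intro k hks hkt
          rcases lt_trichotomy ((k : ℕ)) ((s : ℕ)) with hk | hk | hk
          · rw [hu.1 s k hk, zero_mul]
          · exact absurd (Fin.ext hk) hks
          · rcases lt_trichotomy ((k : ℕ)) ((t : ℕ)) with hk2 | hk2 | hk2
            · rw [ih s k hk (by omega), zero_mul]
            · exact absurd (Fin.ext hk2) hkt
            · rw [hA k t hk2, mul_zero]
      have hR : (A * u) s t = A s s * u s t + A s t := by
        rw [Matrix.mul_apply]
        rw [sum_two _ s t hst' ?_]
        · rw [hu.2 t, mul_one]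
        · intro k hks hkt
          rcases lt_trichotomy ((k : ℕ)) ((s : ℕ)) with hk | hk | hk
          · rw [hA s k hk, zero_mul]
          · exact absurd (Fin.ext hk) hks
          · rcases lt_trichotomy ((k : ℕ)) ((t : ℕ)) with hk2 | hk2 | hk2
            · rw [ih k t hk2 (by omega), mul_zero]
            · exact absurd (Fin.ext hk2) hkt
            · rw [hu.1 k t hk2, mul_zero]
      have heq : A s t + u s t * A t t = A s s * u s t + A s t := by
        rw [← hL, ← hR, hcomm]
      have hz : u s t * (A t t - A s s) = 0 := by linear_combination heq
      rcases mul_eq_zero.mp hz with h0 | h0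
      · exact h0
      · exact absurd (by linear_combination -h0 : A s s = A t t) (hd s t hst)
  ext i j
  rcases lt_trichotomy ((i : ℕ)) ((j : ℕ)) with hij | hij | hij
  · have hne : i ≠ j := fun hh => absurd (congrArg Fin.val hh) (Nat.ne_of_lt hij)
    rw [key ((j : ℕ) - (i : ℕ)) i j hij le_rfl, Matrix.one_apply_ne hne]
  · have : i = j := Fin.ext hij
    subst this
    rw [hu.2 i, Matrix.one_apply_eq]
  · have hne : i ≠ j := fun hh => absurd (congrArg Fin.val hh) (Nat.ne_of_gt hij)
    rw [hu.1 i j hij, Matrix.one_apply_ne hne]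

/-- Two oppositely oriented arrows of a `k`-generalized Kronecker quiver: if the upper
triangular matrices `X, Y` satisfy `X_{ss}·Y_{ss} ≠ X_{tt}·Y_{tt}` for all `s < t`, then
the only pair `(u, v)` of unipotent upper triangular matrices with `u X v⁻¹ = X` and
`v Y u⁻¹ = Y` is the trivial pair `(Iₙ, Iₙ)`. -/
theorem two_opposite_arrows_trivial_stabilizer
    (n : ℕ) (hn : 1 ≤ n) (X Y : Matrix (Fin n) (Fin n) ℂ)
    (hX : UT n X) (hY : UT n Y)
    (hgen : ∀ s t : Fin n, (s : ℕ) < (t : ℕ) → X s s * Y s s ≠ X t t * Y t t)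
    (u v : Matrix (Fin n) (Fin n) ℂ) (hu : Unip n u) (hv : Unip n v)
    (h1 : u * X * v⁻¹ = X) (h2 : v * Y * u⁻¹ = Y) :
    u = 1 ∧ v = 1 := by
  have hvu : IsUnit v.det := by rw [unip_det_one n v hv]; exact isUnit_one
  have huu : IsUnit u.det := by rw [unip_det_one n u hu]; exact isUnit_one
  have e1 : u * X = X * v := by
    have h := congrArg (· * v) h1
    simpa [Matrix.mul_assoc, Matrix.nonsing_inv_mul v hvu] using h
  have e2 : v * Y = Y * u := by
    have h := congrArg (· * u) h2
    simpa [Matrix.mul_assoc, Matrix.nonsing_inv_mul u huu] using h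
  have cu : u * (X * Y) = (X * Y) * u := by
    calc u * (X * Y) = (u * X) * Y := by rw [Matrix.mul_assoc]
    _ = X * (v * Y) := by rw [e1, Matrix.mul_assoc]
    _ = (X * Y) * u := by rw [e2, Matrix.mul_assoc]
  have cv : v * (Y * X) = (Y * X) * v := by
    calc v * (Y * X) = (v * Y) * X := by rw [Matrix.mul_assoc]
    _ = Y * (u * X) := by rw [e2, Matrix.mul_assoc]
    _ = (Y * X) * v := by rw [e1, Matrix.mul_assoc]
  constructor
  · refine comm_unip n (X * Y) u (hX.mul hY) ?_ hu cu
    intro s t hst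
    rw [hX.mul_diag hY s, hX.mul_diag hY t]
    exact hgen s t hst
  · refine comm_unip n (Y * X) v (hY.mul hX) ?_ hv cv
    intro s t hst
    rw [hY.mul_diag hX s, hY.mul_diag hX t]
    intro h
    exact hgen s t hst (by linear_combination h)
end

section
/- Fix k ≥ 1 and 1 ≤ μ < ν ≤ k. The polynomial f_{μν} = c^{(ν)}_{12}(c^{(μ)}_{11} − c^{(μ)}_{22}) − c^{(μ)}_{12}(c^{(ν)}_{11} − c^{(ν)}_{22}) is a semi-invariant of weight b₁₁·b₂₂⁻¹ for the simultaneous conjugation action of the Borel group B₂: for every invertible 2×2 upper triangular matrix b = [[b₁₁, b₁₂],[0, b₂₂]] and every k-tuple C of 2×2 upper triangular matrices, f_{μν}(b C^{(1)} b⁻¹, …, b C^{(k)} b⁻¹) = b₁₁ · b₂₂⁻¹ · f_{μν}(C^{(1)}, …, C^{(k)}). -/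
/-- `UT2 X` : `X` is a `2 × 2` upper triangular complex matrix. -/
def UT2 (X : Matrix (Fin 2) (Fin 2) ℂ) : Prop := X 1 0 = 0

/-- The value of the polynomial
`f_{μν} = c^{(ν)}_{12}(c^{(μ)}_{11} − c^{(μ)}_{22}) − c^{(μ)}_{12}(c^{(ν)}_{11} − c^{(ν)}_{22})`
on a `k`-tuple of `2 × 2` matrices. -/
def fSemiVal (k : ℕ) (μ ν : Fin k) (C : Fin k → Matrix (Fin 2) (Fin 2) ℂ) : ℂ :=
  C ν 0 1 * (C μ 0 0 - C μ 1 1) - C μ 0 1 * (C ν 0 0 - C ν 1 1)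

/-- **Semi-invariance of `f_{μν}`.** For the simultaneous conjugation action of the Borel
group `B₂` of invertible `2 × 2` upper triangular matrices on `k`-tuples of `2 × 2` upper
triangular matrices, `f_{μν}` is a semi-invariant of weight `b₁₁ · b₂₂⁻¹`:
`f_{μν}(b C b⁻¹) = b₁₁ · b₂₂⁻¹ · f_{μν}(C)`. -/
theorem fSemi_is_semiinvariant (k : ℕ) (hk : 1 ≤ k) (μ ν : Fin k) (hμν : μ < ν)
    (b : Matrix (Fin 2) (Fin 2) ℂ) (hb : UT2 b)
    (hb00 : b 0 0 ≠ 0) (hb11 : b 1 1 ≠ 0)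
    (C : Fin k → Matrix (Fin 2) (Fin 2) ℂ) (hC : ∀ γ : Fin k, UT2 (C γ)) :
    fSemiVal k μ ν (fun γ => b * C γ * b⁻¹) =
      b 0 0 * (b 1 1)⁻¹ * fSemiVal k μ ν C := by
  have hbd : b.det = b 0 0 * b 1 1 := by
    rw [Matrix.det_fin_two, hb]; ring
  have hdet : b.det ≠ 0 := hbd ▸ mul_ne_zero hb00 hb11
  have hinv : b⁻¹ = b.det⁻¹ • b.adjugate := by
    rw [Matrix.inv_def, Ring.inverse_eq_inv]
  have hμ := hC μ
  have hν := hC ν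
  simp only [UT2] at hb hμ hν
  simp only [fSemiVal, hinv, Matrix.adjugate_fin_two, Matrix.mul_apply, Fin.sum_univ_two,
    Matrix.smul_apply, Matrix.of_apply, Matrix.cons_val', Matrix.cons_val_zero,
    Matrix.cons_val_one, Matrix.head_cons, Matrix.empty_val', Matrix.cons_val_fin_one,
    Matrix.head_fin_const, smul_eq_mul, hb, hμ, hν, hbd]
  field_simp
  ring
end

section
/- Fix k ≥ 1. A polynomial f in the 3k coordinates c^{(γ)}_{11}, c^{(γ)}_{12}, c^{(γ)}_{22} (1 ≤ γ ≤ k) is invariant under the simultaneous conjugation action of the Borel group B₂ on k-tuples of 2×2 upper triangular matrices if and only if f lies in the ℂ-subalgebra ℂ[c^{(γ)}_{11}, c^{(γ)}_{22} : 1 ≤ γ ≤ k] generated by the diagonal coordinates; in particular the B₂-invariant algebra is a polynomial ring in 2k variables. -/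
/-- `Bor2 b` : `b` is an invertible `2 × 2` upper triangular complex matrix (an element of
the Borel group `B₂`). -/
def Bor2 (b : Matrix (Fin 2) (Fin 2) ℂ) : Prop :=
  b 1 0 = 0 ∧ b 0 0 ≠ 0 ∧ b 1 1 ≠ 0

/-- Index set of the three coordinates `c_{11}, c_{12}, c_{22}` of a `2 × 2` upper
triangular matrix. -/
abbrev UIdx2 := {p : Fin 2 × Fin 2 // p.1 ≤ p.2}

/-- The `B₂`-invariant subalgebra of the coordinate ring of `k`-tuples of `2 × 2` upper
triangular matrices, for the simultaneous conjugation action `b • C = (b C^{(γ)} b⁻¹)_γ`. -/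
noncomputable def invSubB2 (k : ℕ) : Subalgebra ℂ (MvPolynomial (Fin k × UIdx2) ℂ) where
  carrier := { f | ∀ b : Matrix (Fin 2) (Fin 2) ℂ, Bor2 b →
      ∀ C : Fin k → Matrix (Fin 2) (Fin 2) ℂ, (∀ γ : Fin k, UT2 (C γ)) →
      MvPolynomial.eval (fun s => (b * C s.1 * b⁻¹) s.2.1.1 s.2.1.2) f =
      MvPolynomial.eval (fun s => C s.1 s.2.1.1 s.2.1.2) f }
  mul_mem' := by
    intro f g hf hg b hb C hC
    simp only [Set.mem_setOf_eq, map_mul] at *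
    rw [hf b hb C hC, hg b hb C hC]
  one_mem' := by intro b hb C hC; simp
  add_mem' := by
    intro f g hf hg b hb C hC
    simp only [Set.mem_setOf_eq, map_add] at *
    rw [hf b hb C hC, hg b hb C hC]
  zero_mem' := by intro b hb C hC; simp
  algebraMap_mem' := by
    intro c b hb C hC
    simp [MvPolynomial.algebraMap_eq]

open MvPolynomial

/-- The diagonal index set. -/
def DIdx (k : ℕ) : Set (Fin k × UIdx2) := {s | s.2.1.1 = s.2.1.2}

lemma genset_eq (k : ℕ) :
    {p : MvPolynomial (Fin k × UIdx2) ℂ |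
      ∃ (γ : Fin k) (i : Fin 2), p = MvPolynomial.X (γ, ⟨(i, i), le_rfl⟩)} =
    MvPolynomial.X '' (DIdx k) := by
  ext p
  constructor
  · rintro ⟨γ, i, rfl⟩
    exact ⟨(γ, ⟨(i, i), le_rfl⟩), rfl, rfl⟩
  · rintro ⟨⟨γ, ⟨⟨i, j⟩, hij⟩⟩, hs, rfl⟩
    have : i = j := hs
    subst this
    exact ⟨γ, i, rfl⟩

lemma adjoin_eq_supported (k : ℕ) :
    Algebra.adjoin ℂ
      {p : MvPolynomial (Fin k × UIdx2) ℂ |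
        ∃ (γ : Fin k) (i : Fin 2), p = MvPolynomial.X (γ, ⟨(i, i), le_rfl⟩)} =
    MvPolynomial.supported ℂ (DIdx k) := by
  rw [genset_eq]; rfl

noncomputable def diagEquiv (k : ℕ) : (DIdx k) ≃ Fin k × Fin 2 where
  toFun s := (s.1.1, s.1.2.1.1)
  invFun p := ⟨(p.1, ⟨(p.2, p.2), le_rfl⟩), rfl⟩
  left_inv := by rintro ⟨⟨γ, ⟨⟨i, j⟩, hij⟩⟩, hs⟩; have : i = j := hs; subst this; rfl
  right_inv := by rintro ⟨γ, i⟩; rfl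

lemma borelInv (b : Matrix (Fin 2) (Fin 2) ℂ) (hb : Bor2 b) :
    b⁻¹ = !![(b 0 0)⁻¹, -(b 0 1) / (b 0 0 * b 1 1); 0, (b 1 1)⁻¹] := by
  obtain ⟨h10, h00, h11⟩ := hb
  apply Matrix.inv_eq_right_inv
  ext i j
  fin_cases i <;> fin_cases j <;>
    simp [Matrix.mul_apply, Fin.sum_univ_two, h10, Matrix.one_apply] <;>
    (try field_simp) <;> (try ring)

lemma conj_entries (b : Matrix (Fin 2) (Fin 2) ℂ) (hb : Bor2 b)
    (C : Matrix (Fin 2) (Fin 2) ℂ) (hC : UT2 C) :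
    (b * C * b⁻¹) 0 0 = C 0 0 ∧ (b * C * b⁻¹) 1 1 = C 1 1 ∧
    (b * C * b⁻¹) 0 1 = (b 0 0 / b 1 1) * C 0 1 + (b 0 1 / b 1 1) * (C 1 1 - C 0 0) := by
  obtain ⟨h10, h00, h11⟩ := hb
  have hC' : C 1 0 = 0 := hC
  rw [borelInv b ⟨h10, h00, h11⟩]
  refine ⟨?_, ?_, ?_⟩ <;>
    simp [Matrix.mul_apply, Fin.sum_univ_two, h10, hC'] <;>
    (try field_simp) <;> (try ring)

lemma easy_dir (k : ℕ) (f : MvPolynomial (Fin k × UIdx2) ℂ)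
    (hf : f ∈ Algebra.adjoin ℂ
        {p : MvPolynomial (Fin k × UIdx2) ℂ |
          ∃ (γ : Fin k) (i : Fin 2), p = MvPolynomial.X (γ, ⟨(i, i), le_rfl⟩)}) :
    ∀ b : Matrix (Fin 2) (Fin 2) ℂ, Bor2 b →
        ∀ C : Fin k → Matrix (Fin 2) (Fin 2) ℂ, (∀ γ : Fin k, UT2 (C γ)) →
        MvPolynomial.eval (fun s => (b * C s.1 * b⁻¹) s.2.1.1 s.2.1.2) f =
        MvPolynomial.eval (fun s => C s.1 s.2.1.1 s.2.1.2) f := by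
  intro b hb C hC
  induction hf using Algebra.adjoin_induction with
  | mem p hp =>
    obtain ⟨γ, i, rfl⟩ := hp
    simp only [eval_X]
    fin_cases i
    · exact (conj_entries b hb (C γ) (hC γ)).1
    · exact (conj_entries b hb (C γ) (hC γ)).2.1
  | algebraMap c => simp [MvPolynomial.algebraMap_eq]
  | add p q hp hq ihp ihq => simp [ihp, ihq]
  | mul p q hp hq ihp ihq => simp [ihp, ihq]

lemma evalHom_aeval {σ A : Type*} [CommSemiring A] [Algebra ℂ A]
    (φ : A →ₐ[ℂ] ℂ) (v : σ → A) (f : MvPolynomial σ ℂ) :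
    φ (aeval v f) = eval (fun s => φ (v s)) f := by
  rw [MvPolynomial.comp_aeval_apply, ← MvPolynomial.coe_aeval_eq_eval]
  rfl

lemma key_scaling (k : ℕ) (f : MvPolynomial (Fin k × UIdx2) ℂ)
    (H : ∀ b : Matrix (Fin 2) (Fin 2) ℂ, Bor2 b →
        ∀ C : Fin k → Matrix (Fin 2) (Fin 2) ℂ, (∀ γ : Fin k, UT2 (C γ)) →
        MvPolynomial.eval (fun s => (b * C s.1 * b⁻¹) s.2.1.1 s.2.1.2) f =
        MvPolynomial.eval (fun s => C s.1 s.2.1.1 s.2.1.2) f)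
    (x : (Fin k × UIdx2) → ℂ) (t : ℂ) (ht : t ≠ 0) :
    MvPolynomial.eval (fun s => if s.2.1.1 = s.2.1.2 then x s else x s * t) f =
    MvPolynomial.eval x f := by
  set b : Matrix (Fin 2) (Fin 2) ℂ := !![t, 0; 0, 1] with hbdef
  have hb : Bor2 b := by
    refine ⟨?_, ?_, ?_⟩ <;> simp [hbdef, ht]
  set C : Fin k → Matrix (Fin 2) (Fin 2) ℂ := fun γ =>
    !![x (γ, ⟨(0, 0), le_rfl⟩), x (γ, ⟨(0, 1), by decide⟩); 0, x (γ, ⟨(1, 1), le_rfl⟩)]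
    with hCdef
  have hC : ∀ γ, UT2 (C γ) := by intro γ; simp [UT2, hCdef]
  have h := H b hb C hC
  have hR : (fun s : Fin k × UIdx2 => C s.1 s.2.1.1 s.2.1.2) = x := by
    funext s
    obtain ⟨γ, ⟨⟨i, j⟩, hij⟩⟩ := s
    fin_cases i <;> fin_cases j
    · simp [hCdef]
    · simp [hCdef]
    · exact absurd hij (by decide)
    · simp [hCdef]
  have hL : (fun s : Fin k × UIdx2 => (b * C s.1 * b⁻¹) s.2.1.1 s.2.1.2) =
      (fun s => if s.2.1.1 = s.2.1.2 then x s else x s * t) := by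
    funext s
    obtain ⟨γ, ⟨⟨i, j⟩, hij⟩⟩ := s
    obtain ⟨e00, e11, e01⟩ := conj_entries b hb (C γ) (hC γ)
    fin_cases i <;> fin_cases j
    · simpa [hCdef] using e00
    · have h01 : (b * C γ * b⁻¹) 0 1 = x (γ, ⟨(0, 1), by decide⟩) * t := by
        rw [e01]; simp [hbdef, hCdef]; ring
      simpa using h01
    · exact absurd hij (by decide)
    · simpa [hCdef] using e11
  rw [hL, hR] at h
  exact h

noncomputable def psi (k : ℕ) : MvPolynomial (Fin k × UIdx2) ℂ →ₐ[ℂ] MvPolynomial (Fin k × UIdx2) ℂ :=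
  aeval (fun s => if s.2.1.1 = s.2.1.2 then X s else 0)

lemma psi_mem_supported (k : ℕ) (f : MvPolynomial (Fin k × UIdx2) ℂ) :
    psi k f ∈ MvPolynomial.supported ℂ (DIdx k) := by
  induction f using MvPolynomial.induction_on with
  | C a => rw [show (C a : MvPolynomial (Fin k × UIdx2) ℂ) = algebraMap ℂ _ a from rfl,
      AlgHom.commutes]; exact Subalgebra.algebraMap_mem _ a
  | add p q hp hq => rw [map_add]; exact Subalgebra.add_mem _ hp hq
  | mul_X p s hp =>
    rw [map_mul]
    refine Subalgebra.mul_mem _ hp ?_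
    rw [psi, aeval_X]
    by_cases hs : s.2.1.1 = s.2.1.2
    · rw [if_pos hs]
      exact Algebra.subset_adjoin ⟨s, hs, rfl⟩
    · rw [if_neg hs]
      exact Subalgebra.zero_mem _

lemma psi_eq (k : ℕ) (f : MvPolynomial (Fin k × UIdx2) ℂ)
    (H : ∀ b : Matrix (Fin 2) (Fin 2) ℂ, Bor2 b →
        ∀ C : Fin k → Matrix (Fin 2) (Fin 2) ℂ, (∀ γ : Fin k, UT2 (C γ)) →
        MvPolynomial.eval (fun s => (b * C s.1 * b⁻¹) s.2.1.1 s.2.1.2) f =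
        MvPolynomial.eval (fun s => C s.1 s.2.1.1 s.2.1.2) f) :
    psi k f = f := by
  apply MvPolynomial.funext
  intro x
  -- evaluation of psi f at x
  have h1 : eval x (psi k f) = eval (fun s => if s.2.1.1 = s.2.1.2 then x s else 0) f := by
    have := evalHom_aeval (aeval x : MvPolynomial (Fin k × UIdx2) ℂ →ₐ[ℂ] ℂ)
      (fun s : Fin k × UIdx2 => if s.2.1.1 = s.2.1.2 then X s else 0) f
    rw [psi]
    rw [show (eval x : MvPolynomial (Fin k × UIdx2) ℂ → ℂ) = aeval x from
      by rw [← MvPolynomial.coe_aeval_eq_eval]; rfl]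
    rw [this]
    have hfun : (fun s : Fin k × UIdx2 =>
        (aeval x : MvPolynomial (Fin k × UIdx2) ℂ →ₐ[ℂ] ℂ)
          (if s.2.1.1 = s.2.1.2 then X s else 0)) =
        (fun s => if s.2.1.1 = s.2.1.2 then x s else 0) := by
      funext s
      by_cases hs : s.2.1.1 = s.2.1.2 <;> simp [hs]
    exact congrArg (fun g => eval g f) hfun
  -- the one-variable polynomial
  set Q : Polynomial ℂ := aeval (fun s : Fin k × UIdx2 =>
    if s.2.1.1 = s.2.1.2 then Polynomial.C (x s) else Polynomial.C (x s) * Polynomial.X) f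
    with hQdef
  have hQ : ∀ t : ℂ, Polynomial.eval t Q =
      eval (fun s => if s.2.1.1 = s.2.1.2 then x s else x s * t) f := by
    intro t
    have := evalHom_aeval (Polynomial.aeval t : Polynomial ℂ →ₐ[ℂ] ℂ)
      (fun s : Fin k × UIdx2 =>
        if s.2.1.1 = s.2.1.2 then Polynomial.C (x s) else Polynomial.C (x s) * Polynomial.X) f
    rw [hQdef, show (Polynomial.eval t : Polynomial ℂ → ℂ) = Polynomial.aeval t from
      (Polynomial.coe_aeval_eq_eval t).symm]
    rw [this]
    have hfun : (fun s : Fin k × UIdx2 =>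
        (Polynomial.aeval t : Polynomial ℂ →ₐ[ℂ] ℂ)
          (if s.2.1.1 = s.2.1.2 then Polynomial.C (x s)
            else Polynomial.C (x s) * Polynomial.X)) =
        (fun s => if s.2.1.1 = s.2.1.2 then x s else x s * t) := by
      funext s
      by_cases hs : s.2.1.1 = s.2.1.2 <;> simp [hs]
    exact congrArg (fun g => eval g f) hfun
  have hconst : Q = Polynomial.C (eval x f) := by
    apply Polynomial.eq_of_infinite_eval_eq
    apply Set.Infinite.mono (s := {(0 : ℂ)}ᶜ)
    · intro t ht
      simp only [Set.mem_setOf_eq, Polynomial.eval_C]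
      rw [hQ t]
      exact key_scaling k f H x t ht
    · exact Set.Finite.infinite_compl (Set.finite_singleton 0)
  have h0 := hQ 0
  rw [hconst, Polynomial.eval_C] at h0
  have hfun3 : (fun s : Fin k × UIdx2 =>
      if s.2.1.1 = s.2.1.2 then x s else x s * 0) =
      (fun s => if s.2.1.1 = s.2.1.2 then x s else 0) := by
    funext s
    by_cases hs : s.2.1.1 = s.2.1.2 <;> simp [hs]
  rw [hfun3] at h0
  rw [h1]
  exact h0.symm


/-- **`k`-Jordan quiver with `β = 2`, Borel invariants.** A polynomial `f` in the `3k`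
coordinates `c^{(γ)}_{11}, c^{(γ)}_{12}, c^{(γ)}_{22}` is invariant under the simultaneous
conjugation action of `B₂` on `k`-tuples of `2 × 2` upper triangular matrices if and only
if `f` lies in the ℂ-subalgebra generated by the diagonal coordinates; in particular the
`B₂`-invariant algebra is a polynomial ring in `2k` variables. -/
theorem kJordan_2x2_borel_invariants (k : ℕ) (hk : 1 ≤ k) :
    (∀ f : MvPolynomial (Fin k × UIdx2) ℂ,
      (∀ b : Matrix (Fin 2) (Fin 2) ℂ, Bor2 b →
        ∀ C : Fin k → Matrix (Fin 2) (Fin 2) ℂ, (∀ γ : Fin k, UT2 (C γ)) →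
        MvPolynomial.eval (fun s => (b * C s.1 * b⁻¹) s.2.1.1 s.2.1.2) f =
        MvPolynomial.eval (fun s => C s.1 s.2.1.1 s.2.1.2) f) ↔
      f ∈ Algebra.adjoin ℂ
        {p : MvPolynomial (Fin k × UIdx2) ℂ |
          ∃ (γ : Fin k) (i : Fin 2), p = MvPolynomial.X (γ, ⟨(i, i), le_rfl⟩)}) ∧
    Nonempty (invSubB2 k ≃ₐ[ℂ] MvPolynomial (Fin k × Fin 2) ℂ) := by
  have main : ∀ f : MvPolynomial (Fin k × UIdx2) ℂ,
      (∀ b : Matrix (Fin 2) (Fin 2) ℂ, Bor2 b →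
        ∀ C : Fin k → Matrix (Fin 2) (Fin 2) ℂ, (∀ γ : Fin k, UT2 (C γ)) →
        MvPolynomial.eval (fun s => (b * C s.1 * b⁻¹) s.2.1.1 s.2.1.2) f =
        MvPolynomial.eval (fun s => C s.1 s.2.1.1 s.2.1.2) f) ↔
      f ∈ Algebra.adjoin ℂ
        {p : MvPolynomial (Fin k × UIdx2) ℂ |
          ∃ (γ : Fin k) (i : Fin 2), p = MvPolynomial.X (γ, ⟨(i, i), le_rfl⟩)} := by
    intro f
    constructor
    · intro H
      rw [adjoin_eq_supported]
      rw [← psi_eq k f H]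
      exact psi_mem_supported k f
    · exact easy_dir k f
  refine ⟨main, ?_⟩
  have hsub : invSubB2 k = MvPolynomial.supported ℂ (DIdx k) := by
    ext f
    have hmem : f ∈ invSubB2 k ↔
        (∀ b : Matrix (Fin 2) (Fin 2) ℂ, Bor2 b →
          ∀ C : Fin k → Matrix (Fin 2) (Fin 2) ℂ, (∀ γ : Fin k, UT2 (C γ)) →
          MvPolynomial.eval (fun s => (b * C s.1 * b⁻¹) s.2.1.1 s.2.1.2) f =
          MvPolynomial.eval (fun s => C s.1 s.2.1.1 s.2.1.2) f) := Iff.rfl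
    rw [hmem, main f, adjoin_eq_supported]
  exact ⟨(Subalgebra.equivOfEq _ _ hsub).trans
    ((MvPolynomial.supportedEquivMvPolynomial (DIdx k)).trans
      (MvPolynomial.renameEquiv ℂ (diagEquiv k)))⟩
end

section
/- Let n ≥ 1, let r be an n×n upper triangular complex matrix whose diagonal entries are pairwise distinct, and let s be any n×n complex matrix with r·s = s·r. Then there exists an invertible upper triangular matrix b ∈ GLₙ(ℂ) such that b·r·b⁻¹ and b·s·b⁻¹ are both diagonal matrices. -/
noncomputable def Pcol {n : ℕ} (r : Matrix (Fin n) (Fin n) ℂ) (j : Fin n) : Fin n → ℂ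
  | i =>
    if _h : (i : ℕ) < (j : ℕ) then
      (∑ k ∈ (Finset.univ.filter
          (fun k : Fin n => (i : ℕ) < (k : ℕ) ∧ (k : ℕ) ≤ (j : ℕ))).attach,
        r i k.1 * Pcol r j k.1) / (r j j - r i i)
    else if i = j then 1 else 0
  termination_by i => (j : ℕ) - (i : ℕ)
  decreasing_by
    have hk := k.2
    simp only [Finset.mem_filter, Finset.mem_univ, true_and] at hk
    omega

theorem Pcol_zero {n : ℕ} (r : Matrix (Fin n) (Fin n) ℂ) (j i : Fin n)
    (h : (j : ℕ) < (i : ℕ)) : Pcol r j i = 0 := by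
  rw [Pcol]
  have h1 : ¬ (i : ℕ) < (j : ℕ) := by omega
  have h2 : i ≠ j := by intro he; subst he; omega
  simp [h1, h2]

theorem Pcol_diag {n : ℕ} (r : Matrix (Fin n) (Fin n) ℂ) (j : Fin n) :
    Pcol r j j = 1 := by
  rw [Pcol]; simp

theorem Pcol_spec {n : ℕ} (r : Matrix (Fin n) (Fin n) ℂ) (j i : Fin n)
    (h : (i : ℕ) < (j : ℕ)) (hne : r j j - r i i ≠ 0) :
    (r j j - r i i) * Pcol r j i =
      ∑ k ∈ Finset.univ.filter
          (fun k : Fin n => (i : ℕ) < (k : ℕ) ∧ (k : ℕ) ≤ (j : ℕ)),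
        r i k * Pcol r j k := by
  rw [Pcol]
  simp only [h, dif_pos]
  rw [mul_div_cancel₀ _ hne]
  exact Finset.sum_attach _ (fun k => r i k * Pcol r j k)

noncomputable def Pm {n : ℕ} (r : Matrix (Fin n) (Fin n) ℂ) :
    Matrix (Fin n) (Fin n) ℂ := Matrix.of fun i j => Pcol r j i

theorem Pm_blockTriangular {n : ℕ} (r : Matrix (Fin n) (Fin n) ℂ) :
    (Pm r).BlockTriangular id := by
  intro i j hij
  exact Pcol_zero r j i (by exact hij)

theorem Pm_det {n : ℕ} (r : Matrix (Fin n) (Fin n) ℂ) : (Pm r).det = 1 := by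
  rw [Matrix.det_of_upperTriangular (Pm_blockTriangular r)]
  simp [Pm, Pcol_diag]

theorem r_mul_Pm {n : ℕ} (r : Matrix (Fin n) (Fin n) ℂ)
    (hr : UT n r) (hdist : ∀ i j : Fin n, i ≠ j → r i i ≠ r j j) :
    r * Pm r = Pm r * Matrix.diagonal (fun i => r i i) := by
  ext i j
  rw [Matrix.mul_apply, Matrix.mul_diagonal]
  have hzero : ∀ k : Fin n, k ∉ Finset.univ.filter
      (fun k : Fin n => (i : ℕ) ≤ (k : ℕ) ∧ (k : ℕ) ≤ (j : ℕ)) →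
      r i k * Pm r k j = 0 := by
    intro k hk
    simp only [Finset.mem_filter, Finset.mem_univ, true_and, not_and, not_le] at hk
    rcases lt_or_ge (k : ℕ) (i : ℕ) with h | h
    · rw [hr i k h, zero_mul]
    · rw [show (Pm r) k j = Pcol r j k from rfl, Pcol_zero r j k (hk h), mul_zero]
  rw [← Finset.sum_subset (Finset.filter_subset _ _) (fun k _ hk => hzero k hk)]
  rcases lt_trichotomy (i : ℕ) (j : ℕ) with h | h | h
  · -- i < j
    have hins : Finset.univ.filter
        (fun k : Fin n => (i : ℕ) ≤ (k : ℕ) ∧ (k : ℕ) ≤ (j : ℕ)) =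
        insert i (Finset.univ.filter
          (fun k : Fin n => (i : ℕ) < (k : ℕ) ∧ (k : ℕ) ≤ (j : ℕ))) := by
      ext k
      simp only [Finset.mem_filter, Finset.mem_univ, true_and, Finset.mem_insert]
      constructor
      · rintro ⟨h1, h2⟩
        rcases eq_or_lt_of_le h1 with he | hlt
        · left; exact Fin.ext he.symm
        · right; exact ⟨hlt, h2⟩
      · rintro (rfl | ⟨h1, h2⟩)
        · exact ⟨le_refl _, le_of_lt h⟩
        · exact ⟨le_of_lt h1, h2⟩
    rw [hins, Finset.sum_insert (by simp)]
    have hne : i ≠ j := by intro he; subst he; omega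
    have hsub : r j j - r i i ≠ 0 := sub_ne_zero.mpr (Ne.symm (hdist i j hne))
    have := Pcol_spec r j i h hsub
    have hPm : ∀ k, Pm r k j = Pcol r j k := fun k => rfl
    simp only [hPm]
    rw [← this]
    ring
  · -- i = j
    have : i = j := Fin.ext h
    subst this
    have hfil : Finset.univ.filter
        (fun k : Fin n => (i : ℕ) ≤ (k : ℕ) ∧ (k : ℕ) ≤ (i : ℕ)) = {i} := by
      ext k
      simp only [Finset.mem_filter, Finset.mem_univ, true_and, Finset.mem_singleton]
      constructor
      · rintro ⟨h1, h2⟩; exact Fin.ext (le_antisymm h2 h1)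
      · rintro rfl; exact ⟨le_refl _, le_refl _⟩
    rw [hfil, Finset.sum_singleton]
    show r i i * Pcol r i i = Pcol r i i * r i i
    rw [Pcol_diag]; ring
  · -- i > j
    have hfil : Finset.univ.filter
        (fun k : Fin n => (i : ℕ) ≤ (k : ℕ) ∧ (k : ℕ) ≤ (j : ℕ)) = ∅ := by
      ext k
      simp only [Finset.mem_filter, Finset.mem_univ, true_and, Finset.notMem_empty,
        iff_false, not_and, not_le]
      omega
    rw [hfil, Finset.sum_empty]
    show (0 : ℂ) = Pcol r j i * r j j
    rw [Pcol_zero r j i h, zero_mul]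


/-- **Simultaneous diagonalization by the Borel.** If `r` is an upper triangular matrix
with pairwise distinct diagonal entries (a regular element of 𝔟) and `s` is any matrix
commuting with `r`, then there is an invertible upper triangular matrix `b` conjugating
both `r` and `s` to diagonal matrices. -/
theorem borel_simultaneous_diagonalization
    (n : ℕ) (hn : 1 ≤ n) (r s : Matrix (Fin n) (Fin n) ℂ)
    (hr : UT n r)
    (hdist : ∀ i j : Fin n, i ≠ j → r i i ≠ r j j)
    (hcomm : r * s = s * r) :
    ∃ b : Matrix (Fin n) (Fin n) ℂ,
      UT n b ∧ IsUnit b ∧ (b * r * b⁻¹).IsDiag ∧ (b * s * b⁻¹).IsDiag := by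
  set P := Pm r with hP
  have hdet : IsUnit P.det := by rw [Pm_det]; exact isUnit_one
  have hPu : IsUnit P := (Matrix.isUnit_iff_isUnit_det P).mpr hdet
  haveI : Invertible P := P.invertibleOfIsUnitDet hdet
  refine ⟨P⁻¹, ?_, ?_, ?_, ?_⟩
  · intro i j hij
    exact Matrix.blockTriangular_inv_of_blockTriangular (Pm_blockTriangular r) hij
  · exact Matrix.isUnit_nonsing_inv_iff.mpr hPu
  · have hinv : P⁻¹⁻¹ = P := Matrix.nonsing_inv_nonsing_inv P hdet
    rw [hinv]
    have : P⁻¹ * r * P = Matrix.diagonal (fun i => r i i) := by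
      rw [Matrix.mul_assoc, r_mul_Pm r hr hdist, ← Matrix.mul_assoc,
        Matrix.nonsing_inv_mul P hdet, Matrix.one_mul]
    rw [this]
    exact Matrix.isDiag_diagonal _
  · have hinv : P⁻¹⁻¹ = P := Matrix.nonsing_inv_nonsing_inv P hdet
    rw [hinv]
    set c := P⁻¹ * s * P with hc
    have hrP : P⁻¹ * r * P = Matrix.diagonal (fun i => r i i) := by
      rw [Matrix.mul_assoc, r_mul_Pm r hr hdist, ← Matrix.mul_assoc,
        Matrix.nonsing_inv_mul P hdet, Matrix.one_mul]
    have hcd : Matrix.diagonal (fun i => r i i) * c =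
        c * Matrix.diagonal (fun i => r i i) := by
      rw [← hrP, hc]
      have h1 : P * P⁻¹ = 1 := Matrix.mul_nonsing_inv P hdet
      calc P⁻¹ * r * P * (P⁻¹ * s * P)
          = P⁻¹ * r * (P * P⁻¹) * s * P := by noncomm_ring
        _ = P⁻¹ * (r * s) * P := by rw [h1]; noncomm_ring
        _ = P⁻¹ * (s * r) * P := by rw [hcomm]
        _ = P⁻¹ * s * (P * P⁻¹) * r * P := by rw [h1]; noncomm_ring
        _ = P⁻¹ * s * P * (P⁻¹ * r * P) := by noncomm_ring
    intro i j hij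
    have h1 : (Matrix.diagonal (fun i => r i i) * c) i j = r i i * c i j :=
      Matrix.diagonal_mul _ _ _ _
    have h2 : (c * Matrix.diagonal (fun i => r i i)) i j = c i j * r j j :=
      Matrix.mul_diagonal _ _ _ _
    have h3 : r i i * c i j = c i j * r j j := by rw [← h1, ← h2, hcd]
    have h4 : c i j * (r i i - r j j) = 0 := by linear_combination h3
    have h5 : r i i - r j j ≠ 0 := sub_ne_zero.mpr (hdist i j hij)
    exact (mul_eq_zero.mp h4).resolve_right h5
end
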